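/- Let L⁻, L⁺ : Ω → 𝕍⁺ be Borel measurable with L⁻(ω)(t) ≤ L⁺(ω)(t) for all t ∈ [0,T) for ℙ-almost every ω. Then the family of laws { ℙ ∘ (L⁻ ∨ L ∧ L⁺)⁻¹ : L : Ω → 𝕍⁺ Borel measurable } is tight in the space of Borel probability measures on (𝕍⁺, d_L): for every ε > 0 there exists a compact set K ⊆ 𝕍⁺ such that μ(K) ≥ 1 − ε for every measure μ in this family. Here (L⁻ ∨ L ∧ L⁺)(ω)(t) := L⁻(ω)(t) ∨ L(ω)(t) ∧ L⁺(ω)(t), which again defines an element of 𝕍⁺. -/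

import Mathlib

/-!
Left-continuity determines an element of `𝕍⁺` by its values at the rationals of `(0,T)`, and
`f ↦ (t ↦ sup_{q<t} f q)` is continuous from monotone rational families, with the product
topology, into the Lévy topology: Lévy-closeness only has to be tested on a finite grid of
rationals. By Tychonoff, the elements of `𝕍⁺` whose value at every rational `q` lies in a fixed
interval `[A q, B q]` therefore lie in a compact set. On the almost sure event `L⁻ ≤ L⁺` the clamp
lies between `L⁻` and `L⁺`, so it suffices to choose for each rational `q` a bound `R q` with
`ℙ(L⁻(q) < -R q or L⁺(q) > R q) ≤ δ q`, where `∑ δ q < ε`.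
-/

open MeasureTheory Filter Set Topology

noncomputable section

/-- Membership in the space `𝕍⁺` of nondecreasing, left-continuous functions
`v : [0,T) → ℝ ∪ {−∞}` with `v 0 = −∞` and `v` real-valued on `(0,T)`
(encoded as functions `ℝ → WithBot ℝ`, normalized to `⊥` outside `(0,T)`;
left-continuity of a nondecreasing function is expressed in order-theoretic
terms: `v t` is the least upper bound of the values of `v` on `[0,t)`). -/
def InVPlus (T : ℝ) (v : ℝ → WithBot ℝ) : Prop :=
  (∀ t : ℝ, t ∉ Set.Ioo 0 T → v t = ⊥) ∧
  (∀ s t : ℝ, 0 ≤ s → s ≤ t → t < T → v s ≤ v t) ∧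
  (∀ t : ℝ, t ∈ Set.Ioo 0 T → v t ≠ ⊥) ∧
  (∀ t : ℝ, t ∈ Set.Ioo 0 T → IsLUB (v '' Set.Ico 0 t) (v t))

/-- The Lévy metric `d_L` on `𝕍⁺`:
`d_L(v₁,v₂) = inf {ε ≥ 0 : v₁((t−ε)∨0) − ε ≤ v₂(t), v₂((t−ε)∨0) − ε ≤ v₁(t), ∀ t ∈ (0,T)}`. -/
noncomputable def dL (T : ℝ) (v₁ v₂ : ℝ → WithBot ℝ) : ℝ :=
  sInf {ε : ℝ | 0 ≤ ε ∧ ∀ t : ℝ, t ∈ Set.Ioo 0 T →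
    (v₁ (max (t - ε) 0)).map (fun x => x - ε) ≤ v₂ t ∧
    (v₂ (max (t - ε) 0)).map (fun x => x - ε) ≤ v₁ t}

/-- The Polish space `(𝕍⁺, d_L)`, as a type. -/
structure VPlus (T : ℝ) where
  toFun : ℝ → WithBot ℝ
  mem : InVPlus T toFun

/-- The metric topology of `d_L` on `𝕍⁺` (generated by the open balls). -/
instance (T : ℝ) : TopologicalSpace (VPlus T) :=
  TopologicalSpace.generateFrom
    {U : Set (VPlus T) | ∃ v : VPlus T, ∃ ε : ℝ, 0 < ε ∧
      U = {w : VPlus T | dL T v.toFun w.toFun < ε}}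

/-- The Borel σ-algebra of `(𝕍⁺, d_L)`. -/
instance (T : ℝ) : MeasurableSpace (VPlus T) := borel (VPlus T)

namespace WithBot

lemma map_sub_mono (e : ℝ) : Monotone (WithBot.map (· - e)) :=
  monotone_map_iff.2 fun _ _ h => sub_le_sub_right h e

lemma map_sub_map_sub (a : WithBot ℝ) (e₁ e₂ : ℝ) :
    (a.map (· - e₁)).map (· - e₂) = a.map (· - (e₁ + e₂)) := by
  cases a <;> simp [sub_sub]

end WithBot

section Levy

variable {T : ℝ}

def LevyLE (T ε : ℝ) (v w : ℝ → WithBot ℝ) : Prop :=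
  ∀ t ∈ Ioo 0 T, (v (max (t - ε) 0)).map (· - ε) ≤ w t

def LevyClose (T ε : ℝ) (v w : ℝ → WithBot ℝ) : Prop :=
  0 ≤ ε ∧ LevyLE T ε v w ∧ LevyLE T ε w v

lemma dL_eq_sInf (v w : ℝ → WithBot ℝ) : dL T v w = sInf {ε | LevyClose T ε v w} := by
  simp only [dL, LevyClose, LevyLE, ← forall_and]

lemma levyLE_of_apply_zero {ε : ℝ} {v : ℝ → WithBot ℝ} (hv : v 0 = ⊥) (w : ℝ → WithBot ℝ)
    (hε : T ≤ ε) : LevyLE T ε v w := fun t ht => by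
  rw [max_eq_right (by linarith [ht.2]), hv]
  exact bot_le

lemma LevyLE.trans {ε₁ ε₂ : ℝ} {u v w : ℝ → WithBot ℝ} (hu : u 0 = ⊥) (hε₁ : 0 ≤ ε₁)
    (hε₂ : 0 ≤ ε₂) (h₁ : LevyLE T ε₁ u v) (h₂ : LevyLE T ε₂ v w) : LevyLE T (ε₁ + ε₂) u w := by
  intro t ht
  by_cases hs : 0 < t - ε₂
  · have hv := h₂ t ht
    rw [max_eq_left hs.le] at hv
    calc (u (max (t - (ε₁ + ε₂)) 0)).map (· - (ε₁ + ε₂))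
        = ((u (max (t - ε₂ - ε₁) 0)).map (· - ε₁)).map (· - ε₂) := by
          rw [WithBot.map_sub_map_sub, sub_sub, add_comm ε₂]
      _ ≤ (v (t - ε₂)).map (· - ε₂) :=
          WithBot.map_sub_mono ε₂ (h₁ _ ⟨hs, by linarith [ht.2]⟩)
      _ ≤ w t := hv
  · rw [max_eq_right (by linarith), hu]
    exact bot_le

lemma LevyClose.dL_le {ε : ℝ} {v w : ℝ → WithBot ℝ} (h : LevyClose T ε v w) : dL T v w ≤ ε := by
  rw [dL_eq_sInf]
  exact csInf_le ⟨0, fun _ hε => hε.1⟩ h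

lemma levyClose_zero_self (v : ℝ → WithBot ℝ) : LevyClose T 0 v v := by
  have h : LevyLE T 0 v v := fun t ht => by
    rw [sub_zero, max_eq_left ht.1.le]
    cases v t <;> simp
  exact ⟨le_rfl, h, h⟩

lemma LevyClose.trans {ε₁ ε₂ : ℝ} {u v w : ℝ → WithBot ℝ} (hu : u 0 = ⊥) (hw : w 0 = ⊥)
    (h₁ : LevyClose T ε₁ u v) (h₂ : LevyClose T ε₂ v w) : LevyClose T (ε₁ + ε₂) u w :=
  ⟨add_nonneg h₁.1 h₂.1, h₁.2.1.trans hu h₁.1 h₂.1 h₂.2.1,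
    add_comm ε₁ ε₂ ▸ h₂.2.2.trans hw h₂.1 h₁.1 h₁.2.2⟩

lemma exists_levyClose_lt_of_dL_lt {ε : ℝ} {v w : ℝ → WithBot ℝ} (hv : v 0 = ⊥) (hw : w 0 = ⊥)
    (h : dL T v w < ε) : ∃ ε' < ε, LevyClose T ε' v w := by
  rw [dL_eq_sInf] at h
  have hne : {ε | LevyClose T ε v w}.Nonempty :=
    ⟨max T 0, le_max_right T 0, levyLE_of_apply_zero hv w (le_max_left T 0),
      levyLE_of_apply_zero hw v (le_max_left T 0)⟩
  obtain ⟨ε', hε', hlt⟩ := exists_lt_of_csInf_lt hne h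
  exact ⟨ε', hlt, hε'⟩

end Levy

namespace VPlus

lemma ext {T : ℝ} {v w : VPlus T} (h : v.toFun = w.toFun) : v = w := by
  cases v; cases w; cases h; rfl

variable {T s t : ℝ} (v : VPlus T)

lemma apply_eq_bot (ht : t ∉ Ioo 0 T) : v.toFun t = ⊥ := v.mem.1 t ht

lemma apply_zero : v.toFun 0 = ⊥ := v.apply_eq_bot fun h => h.1.false

lemma apply_mono (hs : 0 ≤ s) (hst : s ≤ t) (ht : t < T) : v.toFun s ≤ v.toFun t :=
  v.mem.2.1 s t hs hst ht

lemma apply_ne_bot (ht : t ∈ Ioo 0 T) : v.toFun t ≠ ⊥ := v.mem.2.2.1 t ht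

lemma isLUB_apply (ht : t ∈ Ioo 0 T) : IsLUB (v.toFun '' Ico 0 t) (v.toFun t) :=
  v.mem.2.2.2 t ht

lemma exists_apply_eq_coe (ht : t ∈ Ioo 0 T) : ∃ x : ℝ, v.toFun t = x := by
  obtain ⟨x, hx⟩ := WithBot.ne_bot_iff_exists.1 (v.apply_ne_bot ht)
  exact ⟨x, hx.symm⟩

end VPlus

section Topology

variable {T t : ℝ}

instance (T : ℝ) : BorelSpace (VPlus T) := ⟨rfl⟩

lemma isOpen_setOf_dL_lt (v : VPlus T) {ε : ℝ} (hε : 0 < ε) :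
    IsOpen {w : VPlus T | dL T v.toFun w.toFun < ε} :=
  TopologicalSpace.isOpen_generateFrom_of_mem ⟨v, ε, hε, rfl⟩

lemma continuous_of_levyClose {X : Type*} [TopologicalSpace X] {φ : X → VPlus T}
    (h : ∀ x, ∀ ε > 0, ∀ᶠ y in 𝓝 x, LevyClose T ε (φ x).toFun (φ y).toFun) :
    Continuous φ := by
  refine continuous_generateFrom_iff.2 ?_
  rintro _ ⟨v, ε, -, rfl⟩
  refine isOpen_iff_mem_nhds.2 fun x hx => ?_
  obtain ⟨ε', hε', hvx⟩ := exists_levyClose_lt_of_dL_lt v.apply_zero (φ x).apply_zero hx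
  filter_upwards [h x ((ε - ε') / 2) (by linarith)] with y hy
  exact (hvx.trans v.apply_zero (φ y).apply_zero hy).dL_le.trans_lt (by linarith)

/-- Left-continuity makes evaluation lower semicontinuous for the Lévy topology. -/
lemma isOpen_setOf_lt_apply (ht : t ∈ Ioo 0 T) (c : ℝ) :
    IsOpen {v : VPlus T | (c : WithBot ℝ) < v.toFun t} := by
  refine isOpen_iff_forall_mem_open.2 fun v hv => ?_
  obtain ⟨x, hx⟩ := v.exists_apply_eq_coe ht
  have hcx : c < x := by rw [Set.mem_ofPred_eq, hx] at hv; exact_mod_cast hv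
  obtain ⟨_, ⟨s, hs, rfl⟩, hcs, -⟩ := (v.isLUB_apply ht).exists_between
    (b := (((c + x) / 2 : ℝ) : WithBot ℝ)) (by rw [hx]; exact_mod_cast (by linarith))
  have hρ : 0 < min ((x - c) / 2) (t - s) := lt_min (by linarith) (by linarith [hs.2])
  refine ⟨_, fun w hw => ?_, isOpen_setOf_dL_lt v hρ, (levyClose_zero_self _).dL_le.trans_lt hρ⟩
  obtain ⟨ε, hερ, hε⟩ := exists_levyClose_lt_of_dL_lt v.apply_zero w.apply_zero hw
  have hst : s ≤ t - ε := by linarith [min_le_right ((x - c) / 2) (t - s)]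
  have hvw := hε.2.1 t ht
  rw [max_eq_left (by linarith [hs.1])] at hvw
  calc (c : WithBot ℝ) < ((c + x) / 2 - ε : ℝ) := by
        exact_mod_cast (by linarith [min_le_left ((x - c) / 2) (t - s)])
    _ = (((c + x) / 2 : ℝ) : WithBot ℝ).map (· - ε) := (WithBot.map_coe _ _).symm
    _ ≤ (v.toFun (t - ε)).map (· - ε) :=
        WithBot.map_sub_mono ε (hcs.le.trans (v.apply_mono hs.1 hst (by linarith [ht.2, hε.1])))
    _ ≤ w.toFun t := hvw

lemma measurableSet_setOf_apply_lt (ht : t ∈ Ioo 0 T) (c : ℝ) :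
    MeasurableSet {v : VPlus T | v.toFun t < c} := by
  have : {v : VPlus T | v.toFun t < c} =
      ⋃ n : ℕ, {v | ((c - 1 / (n + 1) : ℝ) : WithBot ℝ) < v.toFun t}ᶜ := by
    ext v
    obtain ⟨x, hx⟩ := v.exists_apply_eq_coe ht
    simp only [Set.mem_ofPred_eq, Set.mem_iUnion, Set.mem_compl_iff, not_lt, hx,
      WithBot.coe_lt_coe]
    constructor
    · intro hxc
      obtain ⟨n, hn⟩ := exists_nat_one_div_lt (sub_pos.2 hxc)
      exact ⟨n, by linarith⟩
    · rintro ⟨n, hn⟩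
      linarith [Nat.one_div_pos_of_nat (α := ℝ) (n := n)]
  rw [this]
  exact .iUnion fun n => (isOpen_setOf_lt_apply ht _).measurableSet.compl

end Topology

abbrev RatIoo (T : ℝ) : Type := {q : ℚ // (q : ℝ) ∈ Ioo 0 T}

section RationalCoordinates

variable {T s t c : ℝ} {f g : RatIoo T → ℝ}

lemma exists_ratIoo_btwn (hs : 0 ≤ s) (hst : s < t) (ht : t ≤ T) :
    ∃ q : RatIoo T, s < q.1 ∧ (q.1 : ℝ) < t := by
  obtain ⟨q, hsq, hqt⟩ := exists_rat_btwn hst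
  exact ⟨⟨q, hs.trans_lt hsq, hqt.trans_le ht⟩, hsq, hqt⟩

def supBelow (f : RatIoo T → ℝ) (t : ℝ) : ℝ := sSup (f '' {q | (q.1 : ℝ) < t})

lemma le_supBelow (hf : Monotone f) (ht : t ∈ Ioo 0 T) {q : RatIoo T} (hq : (q.1 : ℝ) < t) :
    f q ≤ supBelow f t := by
  obtain ⟨q₀, htq₀, -⟩ := exists_ratIoo_btwn ht.1.le ht.2 le_rfl
  refine le_csSup ⟨f q₀, ?_⟩ ⟨q, hq, rfl⟩
  rintro _ ⟨p, hp, rfl⟩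
  exact hf (show p.1 ≤ q₀.1 by exact_mod_cast (hp.trans htq₀).le)

lemma supBelow_le (ht : t ∈ Ioo 0 T) (h : ∀ q : RatIoo T, (q.1 : ℝ) < t → f q ≤ c) :
    supBelow f t ≤ c := by
  obtain ⟨q₀, -, hq₀⟩ := exists_ratIoo_btwn le_rfl ht.1 ht.2.le
  refine csSup_le ⟨f q₀, q₀, hq₀, rfl⟩ ?_
  rintro _ ⟨q, hq, rfl⟩
  exact h q hq

def extendRat (f : RatIoo T → ℝ) (t : ℝ) : WithBot ℝ :=
  if t ∈ Ioo 0 T then (supBelow f t : WithBot ℝ) else ⊥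

lemma extendRat_of_mem (ht : t ∈ Ioo 0 T) : extendRat f t = supBelow f t := if_pos ht

lemma extendRat_of_not_mem (ht : t ∉ Ioo 0 T) : extendRat f t = ⊥ := if_neg ht

lemma extendRat_mono (hf : Monotone f) (hs : 0 ≤ s) (hst : s ≤ t) (ht : t < T) :
    extendRat f s ≤ extendRat f t := by
  rcases hs.eq_or_lt with rfl | hs
  · rw [extendRat_of_not_mem fun h => h.1.false]
    exact bot_le
  have htI : t ∈ Ioo 0 T := ⟨hs.trans_le hst, ht⟩
  rw [extendRat_of_mem ⟨hs, hst.trans_lt ht⟩, extendRat_of_mem htI, WithBot.coe_le_coe]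
  exact supBelow_le ⟨hs, hst.trans_lt ht⟩ fun q hq => le_supBelow hf htI (hq.trans_le hst)

lemma inVPlus_extendRat (hf : Monotone f) : InVPlus T (extendRat f) := by
  refine ⟨fun t ht => extendRat_of_not_mem ht, fun s t hs hst ht => extendRat_mono hf hs hst ht,
    fun t ht => by rw [extendRat_of_mem ht]; exact WithBot.coe_ne_bot, fun t ht => ⟨?_, ?_⟩⟩
  · rintro _ ⟨s, hs, rfl⟩
    exact extendRat_mono hf hs.1 hs.2.le ht.2
  · intro u hu
    have hfu : ∀ q : RatIoo T, (q.1 : ℝ) < t → (f q : WithBot ℝ) ≤ u := fun q hq => by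
      have hs : ((q.1 : ℝ) + t) / 2 ∈ Ioo 0 T := ⟨by linarith [q.2.1], by linarith [ht.2]⟩
      calc (f q : WithBot ℝ) ≤ supBelow f (((q.1 : ℝ) + t) / 2) :=
            WithBot.coe_le_coe.2 (le_supBelow hf hs (by linarith))
        _ = extendRat f (((q.1 : ℝ) + t) / 2) := (extendRat_of_mem hs).symm
        _ ≤ u := hu ⟨_, ⟨hs.1.le, by linarith⟩, rfl⟩
    obtain ⟨q₀, -, hq₀⟩ := exists_ratIoo_btwn le_rfl ht.1 ht.2.le
    obtain ⟨y, rfl⟩ := WithBot.ne_bot_iff_exists.1 (ne_bot_of_le_ne_bot WithBot.coe_ne_bot (hfu q₀ hq₀))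
    rw [extendRat_of_mem ht, WithBot.coe_le_coe]
    exact supBelow_le ht fun q hq => WithBot.coe_le_coe.1 (hfu q hq)

def VPlus.ofMonotone (f : {f : RatIoo T → ℝ // Monotone f}) : VPlus T :=
  ⟨extendRat f.1, inVPlus_extendRat f.2⟩

def VPlus.restrictRat (v : VPlus T) (q : RatIoo T) : ℝ :=
  (v.toFun q.1).unbot (v.apply_ne_bot q.2)

lemma VPlus.coe_restrictRat (v : VPlus T) (q : RatIoo T) :
    (v.restrictRat q : WithBot ℝ) = v.toFun q.1 :=
  WithBot.coe_unbot _ _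

lemma VPlus.monotone_restrictRat (v : VPlus T) : Monotone v.restrictRat := fun p q hpq => by
  have := v.apply_mono p.2.1.le (by exact_mod_cast hpq) q.2.2
  rwa [← v.coe_restrictRat, ← v.coe_restrictRat, WithBot.coe_le_coe] at this

lemma VPlus.extendRat_restrictRat (v : VPlus T) : extendRat v.restrictRat = v.toFun := by
  funext t
  by_cases ht : t ∈ Ioo 0 T
  · obtain ⟨x, hx⟩ := v.exists_apply_eq_coe ht
    rw [extendRat_of_mem ht, hx, WithBot.coe_inj]
    refine le_antisymm (supBelow_le ht fun q hq => ?_) ?_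
    · rw [← WithBot.coe_le_coe, v.coe_restrictRat, ← hx]
      exact v.apply_mono q.2.1.le hq.le ht.2
    · rw [← WithBot.coe_le_coe, ← hx]
      refine (v.isLUB_apply ht).2 ?_
      rintro _ ⟨s, hs, rfl⟩
      obtain ⟨q, hsq, hqt⟩ := exists_ratIoo_btwn hs.1 hs.2 ht.2.le
      calc v.toFun s ≤ v.toFun q.1 := v.apply_mono hs.1 hsq.le q.2.2
        _ = v.restrictRat q := (v.coe_restrictRat q).symm
        _ ≤ supBelow v.restrictRat t :=
            WithBot.coe_le_coe.2 (le_supBelow v.monotone_restrictRat ht hqt)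
  · rw [extendRat_of_not_mem ht, v.apply_eq_bot ht]

lemma VPlus.ofMonotone_restrictRat (v : VPlus T) :
    VPlus.ofMonotone ⟨v.restrictRat, v.monotone_restrictRat⟩ = v :=
  VPlus.ext v.extendRat_restrictRat

end RationalCoordinates

section Compactness

variable {T : ℝ}

lemma exists_finite_forall_exists_mem_Ico {ε : ℝ} (hε : 0 < ε) :
    ∃ F : Set (RatIoo T), F.Finite ∧
      ∀ p : RatIoo T, (p.1 : ℝ) + ε < T → ∃ q ∈ F, p ≤ q ∧ (q.1 : ℝ) < p.1 + ε := by
  obtain ⟨r, hr, hrε⟩ := exists_rat_btwn hε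
  have hr' : (0 : ℚ) < r := by exact_mod_cast hr
  refine ⟨{q | ∃ n : ℕ, q.1 = n * r}, ?_, fun p hp => ?_⟩
  · refine (((finite_Iic ⌈T / r⌉₊).image fun n : ℕ => (n : ℚ) * r).preimage
      Subtype.val_injective.injOn).subset ?_
    rintro q ⟨n, hn⟩
    refine ⟨n, ?_, hn.symm⟩
    have hnT : (n : ℝ) * r < T := by exact_mod_cast hn ▸ q.2.2
    exact_mod_cast ((lt_div_iff₀ hr).2 hnT).le.trans (Nat.le_ceil _)
  · set n := ⌈p.1 / r⌉₊
    have hpn : p.1 ≤ n * r := (div_le_iff₀ hr').1 (Nat.le_ceil _)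
    have hnp : (n : ℚ) * r < p.1 + r := by
      have := Nat.ceil_lt_add_one (div_nonneg (by exact_mod_cast p.2.1.le) hr'.le)
      rw [← sub_lt_iff_lt_add, lt_div_iff₀ hr', sub_mul, one_mul] at this
      linarith
    have hpn' : (p.1 : ℝ) ≤ ((n * r : ℚ) : ℝ) := by exact_mod_cast hpn
    have hnp' : ((n * r : ℚ) : ℝ) < p.1 + ε := by
      linarith [show ((n * r : ℚ) : ℝ) < p.1 + r by exact_mod_cast hnp]
    exact ⟨⟨n * r, p.2.1.trans_le hpn', by linarith⟩, ⟨n, rfl⟩, hpn, hnp'⟩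

lemma levyLE_extendRat {f g : RatIoo T → ℝ} (hf : Monotone f) (hg : Monotone g) {ε : ℝ}
    {F : Set (RatIoo T)}
    (hF : ∀ p : RatIoo T, (p.1 : ℝ) + ε < T → ∃ q ∈ F, p ≤ q ∧ (q.1 : ℝ) < p.1 + ε)
    (hgf : ∀ q ∈ F, g q ≤ f q + ε) : LevyLE T ε (extendRat g) (extendRat f) := by
  intro t ht
  by_cases hs : t - ε ∈ Ioo 0 T
  · rw [max_eq_left hs.1.le, extendRat_of_mem hs, extendRat_of_mem ht, WithBot.map_coe,
      WithBot.coe_le_coe, sub_le_iff_le_add]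
    refine supBelow_le hs fun p hp => ?_
    obtain ⟨q, hqF, hpq, hqp⟩ := hF p (by linarith [ht.2])
    calc g p ≤ g q := hg hpq
      _ ≤ f q + ε := hgf q hqF
      _ ≤ supBelow f t + ε := by gcongr; exact le_supBelow hf ht (by linarith)
  · have hs' : max (t - ε) 0 ∉ Ioo 0 T := by
      rcases le_total (t - ε) 0 with h | h
      · rw [max_eq_right h]
        exact fun h' => h'.1.false
      · rwa [max_eq_left h]
    rw [extendRat_of_not_mem hs', WithBot.map_bot]
    exact bot_le

lemma continuous_ofMonotone : Continuous (VPlus.ofMonotone (T := T)) := by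
  refine continuous_of_levyClose fun f ε hε => ?_
  obtain ⟨F, hFfin, hF⟩ := exists_finite_forall_exists_mem_Ico (T := T) hε
  have hnear : ∀ᶠ g in 𝓝 f, ∀ q ∈ F, dist (g.1 q) (f.1 q) < ε :=
    hFfin.eventually_all.2 fun q _ =>
      Metric.tendsto_nhds.1 (((continuous_apply q).comp continuous_subtype_val).tendsto f) ε hε
  filter_upwards [hnear] with g hg
  have hgf : ∀ q ∈ F, |g.1 q - f.1 q| < ε := hg
  exact ⟨hε.le,
    levyLE_extendRat g.2 f.2 hF fun q hq => by linarith [(abs_sub_lt_iff.1 (hgf q hq)).2],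
    levyLE_extendRat f.2 g.2 hF fun q hq => by linarith [(abs_sub_lt_iff.1 (hgf q hq)).1]⟩

lemma isCompact_image_ofMonotone (A B : RatIoo T → ℝ) :
    IsCompact (VPlus.ofMonotone '' (Subtype.val ⁻¹' univ.pi fun q => Icc (A q) (B q))) :=
  (Subtype.isCompact_iff.2 <| by
    rw [image_preimage_eq_inter_range, Subtype.range_coe_subtype]
    exact (isCompact_univ_pi fun q => isCompact_Icc).inter_right isClosed_monotone).image
    continuous_ofMonotone

lemma exists_isCompact_forall_bounds (A B : RatIoo T → ℝ) :
    ∃ K : Set (VPlus T), IsCompact K ∧ ∀ v : VPlus T,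
      (∀ q : RatIoo T, (A q : WithBot ℝ) ≤ v.toFun q.1 ∧ v.toFun q.1 ≤ B q) → v ∈ K := by
  refine ⟨_, isCompact_image_ofMonotone A B, fun v hv =>
    ⟨⟨v.restrictRat, v.monotone_restrictRat⟩, fun q _ => ?_, v.ofMonotone_restrictRat⟩⟩
  simpa only [Set.mem_Icc, ← v.coe_restrictRat, WithBot.coe_le_coe] using hv q

end Compactness

section Probability

open scoped ENNReal

variable {T t : ℝ} {Ω : Type*} [MeasurableSpace Ω]

lemma exists_measure_apply_lt_or_lt_le (P : Measure Ω) [IsFiniteMeasure P] {X Y : Ω → VPlus T}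
    (hX : Measurable X) (hY : Measurable Y) (ht : t ∈ Ioo 0 T) {θ : ℝ≥0∞} (hθ : 0 < θ) :
    ∃ r : ℝ, P {ω | (X ω).toFun t < ((-r : ℝ) : WithBot ℝ) ∨ (r : WithBot ℝ) < (Y ω).toFun t}
      ≤ θ := by
  set s : ℕ → Set Ω := fun n =>
    {ω | (X ω).toFun t < ((-n : ℝ) : WithBot ℝ) ∨ ((n : ℝ) : WithBot ℝ) < (Y ω).toFun t}
  have hs : ∀ n, MeasurableSet (s n) := fun n =>
    (hX (measurableSet_setOf_apply_lt ht _)).union (hY (isOpen_setOf_lt_apply ht _).measurableSet)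
  have hanti : Antitone s := fun m n hmn ω hω => by
    have hmn' : (m : ℝ) ≤ n := by exact_mod_cast hmn
    exact hω.imp (fun h => h.trans_le (WithBot.coe_le_coe.2 (by linarith)))
      fun h => (WithBot.coe_le_coe.2 hmn').trans_lt h
  have hempty : ⋂ n, s n = ∅ := by
    refine eq_empty_of_forall_notMem fun ω hω => ?_
    obtain ⟨x, hx⟩ := (X ω).exists_apply_eq_coe ht
    obtain ⟨y, hy⟩ := (Y ω).exists_apply_eq_coe ht
    obtain ⟨n, hn⟩ := exists_nat_ge (max (-x) y)
    have := mem_iInter.1 hω n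
    simp only [s, Set.mem_ofPred_eq, hx, hy, WithBot.coe_lt_coe] at this
    rcases this with h | h <;> linarith [le_max_left (-x) y, le_max_right (-x) y]
  have htend := tendsto_measure_iInter_atTop (fun n => (hs n).nullMeasurableSet) hanti
    ⟨0, measure_ne_top P _⟩
  rw [hempty, measure_empty] at htend
  obtain ⟨n, hn⟩ := (htend.eventually (Iic_mem_nhds hθ)).exists
  exact ⟨n, hn⟩

lemma ofReal_one_sub_le_map_apply {X : Type*} [MeasurableSpace X] {P : Measure Ω}
    [IsProbabilityMeasure P] {M : Ω → X} (hM : AEMeasurable M P) {E : Set Ω} {K : Set X}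
    {ε : ℝ} (hε : 0 ≤ ε) (hE : P E ≤ ENNReal.ofReal ε) (hK : Eᶜ ≤ᵐ[P] M ⁻¹' K) :
    ENNReal.ofReal (1 - ε) ≤ P.map M K :=
  calc ENNReal.ofReal (1 - ε) = 1 - ENNReal.ofReal ε := by
        rw [ENNReal.ofReal_sub 1 hε, ENNReal.ofReal_one]
    _ ≤ 1 - P E := tsub_le_tsub_left hE 1
    _ ≤ P Eᶜ := tsub_le_iff_left.2 (measure_univ (μ := P) ▸ measure_univ_le_add_compl E)
    _ ≤ P (M ⁻¹' K) := measure_mono_ae hK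
    _ ≤ P.map M K := Measure.le_map_apply hM K

end Probability

theorem clamped_laws_tight_general (T : ℝ)
    {Ω : Type*} [MeasurableSpace Ω] (P : Measure Ω) [IsProbabilityMeasure P]
    (Lm Lp : Ω → VPlus T) (hLm : Measurable Lm) (hLp : Measurable Lp)
    (hle : ∀ᵐ ω ∂P, ∀ t : ℝ, 0 ≤ t → t < T → (Lm ω).toFun t ≤ (Lp ω).toFun t) :
    ∀ ε : ℝ, 0 < ε → ∃ K : Set (VPlus T), IsCompact K ∧
      ∀ L M : Ω → VPlus T, Measurable L → Measurable M →
        (∀ ω t, (M ω).toFun t = (Lm ω).toFun t ⊔ ((L ω).toFun t ⊓ (Lp ω).toFun t)) →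
        ENNReal.ofReal (1 - ε) ≤ P.map M K := by
  intro ε hε
  obtain ⟨δ, hδ, hδε⟩ :=
    ENNReal.exists_pos_sum_of_countable (ENNReal.ofReal_pos.2 hε).ne' (RatIoo T)
  choose R hR using fun q : RatIoo T =>
    exists_measure_apply_lt_or_lt_le P hLm hLp q.2 (ENNReal.coe_pos.2 (hδ q))
  obtain ⟨K, hK, hmemK⟩ := exists_isCompact_forall_bounds (fun q => -R q) R
  refine ⟨K, hK, fun L M _ hM hMeq => ?_⟩
  set bad := ⋃ q : RatIoo T,
    {ω | (Lm ω).toFun q.1 < ((-R q : ℝ) : WithBot ℝ) ∨ (R q : WithBot ℝ) < (Lp ω).toFun q.1}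
  have hbad : P bad ≤ ENNReal.ofReal ε :=
    (measure_iUnion_le _).trans ((ENNReal.tsum_le_tsum hR).trans hδε.le)
  have hgood : badᶜ ≤ᵐ[P] M ⁻¹' K := by
    filter_upwards [hle] with ω hω hω_good
    change ω ∉ bad at hω_good
    simp only [bad, Set.mem_iUnion, Set.mem_ofPred_eq, not_exists, not_or, not_lt] at hω_good
    refine hmemK _ fun q => ⟨?_, ?_⟩ <;> rw [hMeq]
    · exact le_sup_of_le_left (hω_good q).1
    · exact (sup_le (hω _ q.2.1.le q.2.2) inf_le_right).trans (hω_good q).2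
  exact ofReal_one_sub_le_map_apply hM.aemeasurable hε.le hbad hgood

/-- **Tightness of the clamped laws (Proposition 4.1).**
If `L⁻ ≤ L⁺` a.s. are `𝕍⁺`-valued random elements, then the family of laws
`{ℙ ∘ (L⁻ ∨ L ∧ L⁺)⁻¹ : L : Ω → 𝕍⁺ Borel measurable}` is tight: for every `ε > 0`
there is a compact `K ⊆ 𝕍⁺` with `μ(K) ≥ 1 − ε` for every member `μ` of the family.
(The clamp `M = L⁻ ∨ L ∧ L⁺` is characterized pointwise:
`M(ω)(t) = L⁻(ω)(t) ⊔ (L(ω)(t) ⊓ L⁺(ω)(t))`.) -/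
theorem clamped_laws_tight (T : ℝ) (hT : 0 < T)
    {Ω : Type*} [MeasurableSpace Ω] (P : Measure Ω) [IsProbabilityMeasure P]
    (Lm Lp : Ω → VPlus T) (hLm : Measurable Lm) (hLp : Measurable Lp)
    (hle : ∀ᵐ ω ∂P, ∀ t : ℝ, 0 ≤ t → t < T → (Lm ω).toFun t ≤ (Lp ω).toFun t) :
    ∀ ε : ℝ, 0 < ε → ∃ K : Set (VPlus T), IsCompact K ∧
      ∀ L M : Ω → VPlus T, Measurable L → Measurable M →
        (∀ ω t, (M ω).toFun t = (Lm ω).toFun t ⊔ ((L ω).toFun t ⊓ (Lp ω).toFun t)) →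
        ENNReal.ofReal (1 - ε) ≤ P.map M K :=
  clamped_laws_tight_general T P Lm Lp hLm hLp hle

end
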